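/- arXiv:0707.3426 — 2 statements merged into one kernel-verified Lean document; each statement's English description precedes it below -/
import Mathlib

section
/- Let b be a holomorphic map of the open unit disk 𝔻 ⊂ ℂ into itself and let α ≥ 1 be an integer. Then the kernel (z,w) ↦ ((1 − b(z)·conj(b(w)))/(1 − z·conj(w)))^α is positive semidefinite on 𝔻. -/
/-!
Multiplication by a bounded holomorphic function `f` with `|f| ≤ 1` is a contraction on the Hardy
space, and the de Branges–Rovnyak form measures the defect. Concretely, if `f` is holomorphic on the
closed disk, put `h = ∑ c̄ᵢ k_{zᵢ}` and `g = ∑ (cᵢ f(zᵢ))‾ k_{zᵢ}` with `k_w` the Szegő kernel. The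
reproducing property of `k_w` on the unit circle turns the quadratic form into
`(2π)⁻¹ ∫ (|h|² - 2 Re (f g h̄) + |g|²) ≥ (2π)⁻¹ ∫ |h - f g|² ≥ 0`.
A general `b` is the pointwise limit of its dilations `b (r ·)`, `r → 1⁻`, and positivity passes to
pointwise limits. Powers follow from the Schur product theorem.
-/

open Complex Metric ComplexConjugate
open scoped ComplexOrder

noncomputable section

/-- A kernel `K : X → X → ℂ` is positive semidefinite on a set `S`: for all finite
families of points of `S` and scalars, the associated quadratic form is a
nonnegative real number (using the partial order on `ℂ`). -/
def IsPSDKernelOn {X : Type*} (K : X → X → ℂ) (S : Set X) : Prop :=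
  ∀ (n : ℕ) (x : Fin n → X), (∀ i, x i ∈ S) → ∀ c : Fin n → ℂ,
    0 ≤ ∑ i, ∑ j, c i * conj (c j) * K (x i) (x j)

open Matrix Filter Topology

section Kernel

variable {X : Type*} {S : Set X}

lemma posSemidef_of_dotProduct_mulVec_nonneg {ι : Type*} [Fintype ι] [DecidableEq ι]
    {A : Matrix ι ι ℂ} (hA : ∀ v, 0 ≤ star v ⬝ᵥ (A *ᵥ v)) : A.PosSemidef := by
  rw [← Matrix.isPositive_toEuclideanLin_iff, LinearMap.isPositive_iff_complex]
  intro v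
  have hconj : v.ofLp ⬝ᵥ star (A *ᵥ v.ofLp) = star (star v.ofLp ⬝ᵥ (A *ᵥ v.ofLp)) := by
    rw [star_dotProduct, star_star, dotProduct_comm]
  rw [EuclideanSpace.inner_eq_star_dotProduct, Matrix.toLpLin_apply, hconj]
  obtain ⟨hre, him⟩ := Complex.nonneg_iff.mp (hA v)
  generalize star v.ofLp ⬝ᵥ (A *ᵥ v.ofLp) = q at hre him
  refine ⟨Complex.ext ?_ ?_, ?_⟩ <;> simp [← him, hre]

lemma star_star_dotProduct_mulVec_star {n : ℕ} (A : Matrix (Fin n) (Fin n) ℂ) (c : Fin n → ℂ) :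
    star (star c) ⬝ᵥ (A *ᵥ star c) = ∑ i, ∑ j, c i * conj (c j) * A i j := by
  simp only [dotProduct, mulVec, Finset.mul_sum, Pi.star_apply, RCLike.star_def, conj_conj]
  exact Finset.sum_congr rfl fun i _ => Finset.sum_congr rfl fun j _ => by ring

theorem isPSDKernelOn_iff_posSemidef {K : X → X → ℂ} :
    IsPSDKernelOn K S ↔
      ∀ (n : ℕ) (x : Fin n → X), (∀ i, x i ∈ S) →
        (Matrix.of fun i j => K (x i) (x j)).PosSemidef := by
  refine forall₂_congr fun n x => imp_congr_right fun _ => ⟨fun hK => ?_, fun hA c => ?_⟩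
  · refine posSemidef_of_dotProduct_mulVec_nonneg fun v => ?_
    have h := star_star_dotProduct_mulVec_star (of fun i j => K (x i) (x j)) (star v)
    simp only [star_star] at h
    exact h ▸ hK (star v)
  · simpa only [star_star_dotProduct_mulVec_star, of_apply] using
      hA.dotProduct_mulVec_nonneg (star c)

theorem isPSDKernelOn_one : IsPSDKernelOn (fun _ _ : X => (1 : ℂ)) S := by
  intro n x _ c
  have : ∑ i, ∑ j, c i * conj (c j) * 1 = ((normSq (∑ i, c i) : ℝ) : ℂ) := by
    simp only [mul_one, ← Finset.sum_mul_sum, ← map_sum, mul_conj]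
  rw [this]
  exact_mod_cast normSq_nonneg _

theorem IsPSDKernelOn.mul {K L : X → X → ℂ} (hK : IsPSDKernelOn K S) (hL : IsPSDKernelOn L S) :
    IsPSDKernelOn (fun z w => K z w * L z w) S := by
  rw [isPSDKernelOn_iff_posSemidef] at *
  exact fun n x hx => (hK n x hx).hadamard (hL n x hx)

theorem IsPSDKernelOn.pow {K : X → X → ℂ} (hK : IsPSDKernelOn K S) :
    ∀ m : ℕ, IsPSDKernelOn (fun z w => K z w ^ m) S
  | 0 => by simpa only [pow_zero] using isPSDKernelOn_one
  | m + 1 => by simpa only [pow_succ] using (hK.pow m).mul hK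

theorem IsPSDKernelOn.of_tendsto {ι : Type*} {l : Filter ι} [l.NeBot] {K : ι → X → X → ℂ}
    {K₀ : X → X → ℂ} (hK : ∀ᶠ t in l, IsPSDKernelOn (K t) S)
    (hlim : ∀ z ∈ S, ∀ w ∈ S, Tendsto (fun t => K t z w) l (𝓝 (K₀ z w))) :
    IsPSDKernelOn K₀ S := by
  intro n x hx c
  refine ge_of_tendsto ?_ (hK.mono fun t ht => ht n x hx c)
  exact tendsto_finsetSum _ fun i _ => tendsto_finsetSum _ fun j _ =>
    (hlim _ (hx i) _ (hx j)).const_mul _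

end Kernel

open scoped Real

def szegoKernel (w ζ : ℂ) : ℂ := (1 - ζ * conj w)⁻¹

def szegoCombination {n : ℕ} (z c : Fin n → ℂ) (ζ : ℂ) : ℂ := ∑ i, conj (c i) * szegoKernel (z i) ζ

lemma one_sub_mul_conj_ne_zero {ζ w : ℂ} (hζ : ‖ζ‖ ≤ 1) (hw : ‖w‖ < 1) : 1 - ζ * conj w ≠ 0 := by
  refine sub_ne_zero.mpr fun h => ?_
  have : ‖ζ * conj w‖ < 1 := by
    rw [norm_mul, RCLike.norm_conj]
    exact lt_of_le_of_lt (mul_le_of_le_one_left (norm_nonneg w) hζ) hw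
  simp [← h] at this

lemma differentiableOn_szegoKernel {w : ℂ} (hw : w ∈ ball (0 : ℂ) 1) :
    DifferentiableOn ℂ (szegoKernel w) (closedBall 0 1) := fun ζ hζ => by
  have : DifferentiableAt ℂ (fun ζ => 1 - ζ * conj w) ζ := by fun_prop
  exact (this.inv (one_sub_mul_conj_ne_zero (mem_closedBall_zero_iff.mp hζ)
    (mem_ball_zero_iff.mp hw))).differentiableWithinAt

lemma differentiableOn_szegoCombination {n : ℕ} {z : Fin n → ℂ} (hz : ∀ i, z i ∈ ball (0 : ℂ) 1)
    (c : Fin n → ℂ) : DifferentiableOn ℂ (szegoCombination z c) (closedBall 0 1) :=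
  DifferentiableOn.fun_sum fun i _ => (differentiableOn_szegoKernel (hz i)).const_mul _

lemma continuous_comp_circleMap {ψ : ℂ → ℂ} (hψ : ContinuousOn ψ (closedBall 0 1)) :
    Continuous fun θ => ψ (circleMap 0 1 θ) :=
  hψ.comp_continuous (continuous_circleMap 0 1) fun θ =>
    sphere_subset_closedBall (circleMap_mem_sphere _ zero_le_one θ)

theorem integral_mul_conj_szegoKernel {ψ : ℂ → ℂ} (hψ : DifferentiableOn ℂ ψ (closedBall 0 1))
    {w : ℂ} (hw : w ∈ ball (0 : ℂ) 1) :
    ∫ θ in 0..2 * π, ψ (circleMap 0 1 θ) * conj (szegoKernel w (circleMap 0 1 θ)) =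
      2 * π * ψ w := by
  have hC := (closure_ball (0 : ℂ) one_ne_zero ▸ hψ).diffContOnCl.circleIntegral_sub_inv_smul hw
  simp only [circleIntegral, deriv_circleMap, smul_eq_mul] at hC
  refine mul_left_cancel₀ I_ne_zero ?_
  -- on the unit circle `ζ̄ = ζ⁻¹`, so `conj (k_w ζ) = ζ / (ζ - w)`
  have hcircle : ∀ θ : ℝ, circleMap 0 1 θ * I * ((circleMap 0 1 θ - w)⁻¹ * ψ (circleMap 0 1 θ)) =
      I * (ψ (circleMap 0 1 θ) * conj (szegoKernel w (circleMap 0 1 θ))) := by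
    intro θ
    set ζ := circleMap 0 1 θ
    have hζ : ‖ζ‖ = 1 := by simp [ζ]
    have hζ0 : ζ ≠ 0 := norm_ne_zero_iff.mp (by simp [hζ])
    have hζw : ζ - w ≠ 0 := sub_ne_zero.mpr fun h => by simp [← h, hζ] at hw
    rw [szegoKernel, map_inv₀, map_sub, map_one, map_mul, conj_conj, ← Complex.inv_eq_conj hζ]
    field_simp
  rw [← intervalIntegral.integral_const_mul, ← intervalIntegral.integral_congr fun θ _ => hcircle θ,
    hC]
  ring

lemma intervalIntegrable_mul_conj_comp_circleMap {ψ φ : ℂ → ℂ}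
    (hψ : ContinuousOn ψ (closedBall 0 1)) (hφ : ContinuousOn φ (closedBall 0 1)) (a b : ℝ) :
    IntervalIntegrable (fun θ => ψ (circleMap 0 1 θ) * conj (φ (circleMap 0 1 θ)))
      MeasureTheory.volume a b :=
  ((continuous_comp_circleMap hψ).mul
    (continuous_conj.comp (continuous_comp_circleMap hφ))).intervalIntegrable a b

theorem integral_mul_conj_szegoCombination {ψ : ℂ → ℂ} (hψ : DifferentiableOn ℂ ψ (closedBall 0 1))
    {n : ℕ} {z : Fin n → ℂ} (hz : ∀ i, z i ∈ ball (0 : ℂ) 1) (c : Fin n → ℂ) :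
    ∫ θ in 0..2 * π, ψ (circleMap 0 1 θ) * conj (szegoCombination z c (circleMap 0 1 θ)) =
      2 * π * ∑ i, c i * ψ (z i) := by
  have hterm : ∀ i θ,
      ψ (circleMap 0 1 θ) * conj (conj (c i) * szegoKernel (z i) (circleMap 0 1 θ)) =
        c i * (ψ (circleMap 0 1 θ) * conj (szegoKernel (z i) (circleMap 0 1 θ))) := fun i θ => by
    rw [map_mul, conj_conj]; ring
  simp only [szegoCombination, map_sum, Finset.mul_sum]
  rw [intervalIntegral.integral_finsetSum fun i _ => ?_]
  · refine Finset.sum_congr rfl fun i _ => ?_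
    simp only [hterm, intervalIntegral.integral_const_mul,
      integral_mul_conj_szegoKernel hψ (hz i)]
    ring
  · simp only [hterm]
    exact (intervalIntegrable_mul_conj_comp_circleMap hψ.continuousOn
      (differentiableOn_szegoKernel (hz i)).continuousOn _ _).const_mul _

lemma im_sum_sum_mul_conj_mul_eq_zero {n : ℕ} {A : Fin n → Fin n → ℂ}
    (hA : ∀ i j, conj (A i j) = A j i) (c : Fin n → ℂ) :
    (∑ i, ∑ j, c i * conj (c j) * A i j).im = 0 := by
  refine conj_eq_iff_im.mp ?_
  simp only [map_sum, map_mul, conj_conj, hA]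
  rw [Finset.sum_comm]
  exact Finset.sum_congr rfl fun i _ => Finset.sum_congr rfl fun j _ => by ring

lemma re_sub_two_mul_mul_conj_add_mul_conj_nonneg (a b : ℂ) {φ : ℂ} (hφ : ‖φ‖ ≤ 1) :
    0 ≤ ((a - 2 * φ * b) * conj a + b * conj b).re := by
  have hsq : normSq (φ * b) ≤ normSq b := by
    rw [normSq_mul]
    exact mul_le_of_le_one_left (normSq_nonneg b) (by simpa [normSq_eq_norm_sq] using hφ)
  have hdiff := normSq_nonneg (a - φ * b)
  rw [normSq_sub] at hdiff
  simp only [add_re, mul_re, sub_re, conj_re, conj_im, sub_im, mul_im, normSq_apply, re_ofNat,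
    im_ofNat] at *
  linarith

theorem isPSDKernelOn_deBrangesRovnyak_of_closedBall {f : ℂ → ℂ}
    (hf : DifferentiableOn ℂ f (closedBall 0 1)) (hf_le : ∀ ζ ∈ sphere (0 : ℂ) 1, ‖f ζ‖ ≤ 1) :
    IsPSDKernelOn (fun z w => (1 - f z * conj (f w)) / (1 - z * conj w)) (ball 0 1) := by
  intro n z hz c
  set d : Fin n → ℂ := fun i => c i * f (z i)
  set h := szegoCombination z
  set Q := ∑ i, ∑ j, c i * conj (c j) * ((1 - f (z i) * conj (f (z j))) / (1 - z i * conj (z j)))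
  have hhc := differentiableOn_szegoCombination hz c
  have hhd := differentiableOn_szegoCombination hz d
  have hψ : DifferentiableOn ℂ (fun ζ => h c ζ - 2 * f ζ * h d ζ) (closedBall 0 1) :=
    hhc.sub ((hf.const_mul 2).mul hhd)
  have hint₁ :=
    intervalIntegrable_mul_conj_comp_circleMap hψ.continuousOn hhc.continuousOn 0 (2 * π)
  have hint₂ :=
    intervalIntegrable_mul_conj_comp_circleMap hhd.continuousOn hhd.continuousOn 0 (2 * π)
  have hQ : 2 * π * Q = ∫ θ in 0..2 * π,
      (h c (circleMap 0 1 θ) - 2 * f (circleMap 0 1 θ) * h d (circleMap 0 1 θ)) *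
        conj (h c (circleMap 0 1 θ)) + h d (circleMap 0 1 θ) * conj (h d (circleMap 0 1 θ)) := by
    rw [intervalIntegral.integral_add hint₁ hint₂,
      integral_mul_conj_szegoCombination hψ hz, integral_mul_conj_szegoCombination hhd hz,
      ← mul_add, ← Finset.sum_add_distrib]
    congr 1
    simp only [Q, h, d, szegoCombination, szegoKernel, Finset.mul_sum, ← Finset.sum_sub_distrib,
      ← Finset.sum_add_distrib, map_mul]
    exact Finset.sum_congr rfl fun i _ => Finset.sum_congr rfl fun j _ => by ring
  have hQ_im : Q.im = 0 := im_sum_sum_mul_conj_mul_eq_zero (fun i j => by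
    simp only [map_div₀, map_sub, map_one, map_mul, conj_conj]
    ring) c
  have hQ_re : 0 ≤ (2 * π * Q).re := by
    rw [hQ, ← RCLike.re_to_complex, ← intervalIntegral.intervalIntegral_re (hint₁.add hint₂)]
    exact intervalIntegral.integral_nonneg Real.two_pi_pos.le fun θ _ =>
      re_sub_two_mul_mul_conj_add_mul_conj_nonneg _ _
        (hf_le _ (circleMap_mem_sphere _ zero_le_one θ))
  rw [show (2 * π * Q : ℂ) = ((2 * π : ℝ) : ℂ) * Q by push_cast; ring, re_ofReal_mul] at hQ_re
  exact Complex.nonneg_iff.mpr ⟨nonneg_of_mul_nonneg_right hQ_re Real.two_pi_pos, hQ_im.symm⟩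

lemma ofReal_mul_mem_ball {r : ℝ} (hr₀ : 0 ≤ r) (hr₁ : r < 1) {ζ : ℂ}
    (hζ : ζ ∈ closedBall (0 : ℂ) 1) : (r : ℂ) * ζ ∈ ball (0 : ℂ) 1 := by
  rw [mem_ball_zero_iff, norm_mul, norm_real, Real.norm_of_nonneg hr₀]
  exact lt_of_le_of_lt (mul_le_of_le_one_right hr₀ (mem_closedBall_zero_iff.mp hζ)) hr₁

theorem isPSDKernelOn_deBrangesRovnyak {b : ℂ → ℂ} (hb_holo : DifferentiableOn ℂ b (ball 0 1))
    (hb_maps : ∀ z ∈ ball (0 : ℂ) 1, b z ∈ ball (0 : ℂ) 1) :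
    IsPSDKernelOn (fun z w => (1 - b z * conj (b w)) / (1 - z * conj w)) (ball 0 1) := by
  refine IsPSDKernelOn.of_tendsto (l := 𝓝[<] (1 : ℝ))
    (K := fun r z w => (1 - b (r * z) * conj (b (r * w))) / (1 - z * conj w)) ?_ ?_
  · filter_upwards [Ioo_mem_nhdsLT one_pos] with r hr
    refine isPSDKernelOn_deBrangesRovnyak_of_closedBall ?_ fun ζ hζ => ?_
    · exact hb_holo.comp (differentiableOn_const _ |>.mul differentiableOn_id)
        fun ζ => ofReal_mul_mem_ball hr.1.le hr.2
    · exact (mem_ball_zero_iff.mp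
        (hb_maps _ (ofReal_mul_mem_ball hr.1.le hr.2 (sphere_subset_closedBall hζ)))).le
  · have hlim : ∀ z ∈ ball (0 : ℂ) 1, Tendsto (fun r : ℝ => b (r * z)) (𝓝[<] 1) (𝓝 (b z)) := by
      intro z hz
      have hrz : Tendsto (fun r : ℝ => (r : ℂ) * z) (𝓝[<] 1) (𝓝 z) :=
        ((continuous_ofReal.mul continuous_const : Continuous fun r : ℝ => (r : ℂ) * z).tendsto' 1 z
          (by simp)).mono_left nhdsWithin_le_nhds
      exact (hb_holo.continuousOn.continuousAt (isOpen_ball.mem_nhds hz)).tendsto.comp hrz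
    intro z hz w hw
    exact ((tendsto_const_nhds.sub ((hlim z hz).mul ((hlim w hw).star))).div_const _)

theorem deBrangesRovnyak_power_kernel_psd_general
    (b : ℂ → ℂ) (α : ℕ)
    (hb_holo : DifferentiableOn ℂ b (ball (0 : ℂ) 1))
    (hb_maps : ∀ z ∈ ball (0 : ℂ) 1, b z ∈ ball (0 : ℂ) 1) :
    IsPSDKernelOn
      (fun z w => ((1 - b z * conj (b w)) / (1 - z * conj w)) ^ α)
      (ball (0 : ℂ) 1) :=
  (isPSDKernelOn_deBrangesRovnyak hb_holo hb_maps).pow α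

/-- For an integer `α ≥ 1`, the kernel `k^{b,α}(z,w) = ((1 − b(z)·conj(b(w)))/(1 − z·conj w))^α`
is positive semidefinite on the unit disk. -/
theorem deBrangesRovnyak_power_kernel_psd
    (b : ℂ → ℂ) (α : ℕ) (hα : 1 ≤ α)
    (hb_holo : DifferentiableOn ℂ b (ball (0 : ℂ) 1))
    (hb_maps : ∀ z ∈ ball (0 : ℂ) 1, b z ∈ ball (0 : ℂ) 1) :
    IsPSDKernelOn
      (fun z w => ((1 - b z * conj (b w)) / (1 - z * conj w)) ^ α)
      (ball (0 : ℂ) 1) :=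
  deBrangesRovnyak_power_kernel_psd_general b α hb_holo hb_maps
end
end

section
/- Let n ≥ 1, let b : 𝔹ⁿ → 𝔹ⁿ be a holomorphic map of the open unit ball into itself, let α ≥ 1 be a real number, and let f : 𝔹ⁿ → ℂ. If both the kernel K^{b,α}(z,w) = ((1 − ⟨b(z), b(w)⟩)/(1 − ⟨z,w⟩))^α (principal branch) and the kernel K^{b,α}(z,w) − f(z)·conj(f(w)) are positive semidefinite on 𝔹ⁿ, then the kernel (z,w) ↦ (1 − ⟨z,w⟩)^{−α} − f(z)·conj(f(w))·(1 − ⟨b(z), b(w)⟩)^{−α} is positive semidefinite on 𝔹ⁿ. (This is the kernel form of the estimate ‖M_f C_b‖ ≤ ‖f‖_{H²_{n,α}(b)} on H²_{n,α}.) -/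
/-!
The kernel to be shown positive is the pointwise product of `K^{b,α}(z,w) - f(z) conj f(w)` with
`(1 - ⟨b z, b w⟩)^{-α}`: on the ball both `1 - ⟨z,w⟩` and `1 - ⟨b z, b w⟩` lie in the right
half-plane, where principal powers of quotients split. By the binomial series,
`(1 - ⟨b z, b w⟩)^{-α} = ∑ₘ multichoose α m · ⟨b z, b w⟩^m` with nonnegative coefficients, and each
`⟨b z, b w⟩^m` is a finite sum of rank-one kernels `g(z) conj g(w)`. Multiplying a positive
semidefinite kernel by rank-one kernels, taking nonnegative combinations and pointwise limits all
preserve positivity.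
-/

open Complex Metric ComplexConjugate
open scoped ComplexOrder

noncomputable section

open Finset

namespace IsPSDKernelOn

variable {X : Type*} {S : Set X} {K L : X → X → ℂ}

theorem congr (hK : IsPSDKernelOn K S) (h : ∀ z ∈ S, ∀ w ∈ S, K z w = L z w) :
    IsPSDKernelOn L S := fun N x hx c => by
  simpa only [h _ (hx _) _ (hx _)] using hK N x hx c

theorem conj_mul (hK : IsPSDKernelOn K S) (g : X → ℂ) :
    IsPSDKernelOn (fun z w => g z * conj (g w) * K z w) S := fun N x hx c => by
  convert hK N x hx (fun i => c i * g (x i)) using 3 with i _ j _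
  simp only [map_mul]
  ring

theorem ofReal_mul (hK : IsPSDKernelOn K S) {a : ℝ} (ha : 0 ≤ a) :
    IsPSDKernelOn (fun z w => (a : ℂ) * K z w) S := fun N x hx c => by
  simp only [mul_left_comm _ (a : ℂ), ← mul_sum]
  exact mul_nonneg (zero_le_real.mpr ha) (hK N x hx c)

theorem sum {ι : Type*} (s : Finset ι) {K : ι → X → X → ℂ}
    (hK : ∀ p ∈ s, IsPSDKernelOn (K p) S) :
    IsPSDKernelOn (fun z w => ∑ p ∈ s, K p z w) S := fun N x hx c => by
  simp only [mul_sum]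
  rw [sum_congr rfl fun i _ => sum_comm, sum_comm]
  exact sum_nonneg fun p hp => hK p hp N x hx c

theorem of_hasSum {K : ℕ → X → X → ℂ} (hK : ∀ m, IsPSDKernelOn (K m) S)
    (hL : ∀ z ∈ S, ∀ w ∈ S, HasSum (fun m => K m z w) (L z w)) :
    IsPSDKernelOn L S := fun N x hx c =>
  (hasSum_sum fun i _ => hasSum_sum fun j _ => (hL _ (hx i) _ (hx j)).mul_left _).nonneg
    fun m => hK m N x hx c

theorem inner_pow_mul {ι : Type*} [Fintype ι] (hK : IsPSDKernelOn K S) (v : X → ι → ℂ) (m : ℕ) :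
    IsPSDKernelOn (fun z w => (∑ k, v z k * conj (v w k)) ^ m * K z w) S := by
  refine (IsPSDKernelOn.sum (K := fun p z w => (∏ r, v z (p r)) * conj (∏ r, v w (p r)) * K z w)
    (univ : Finset (Fin m → ι)) fun p _ => hK.conj_mul fun z => ∏ r, v z (p r)).congr
    fun z _ w _ => ?_
  simp only [Fintype.sum_pow, sum_mul, prod_mul_distrib, map_prod]

end IsPSDKernelOn

theorem Ring.multichoose_nonneg {a : ℝ} (ha : 0 ≤ a) (m : ℕ) : 0 ≤ Ring.multichoose a m := by
  have hpoch : 0 ≤ (ascPochhammer ℝ m).eval a := by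
    induction m with
    | zero => simp
    | succ m ih => rw [ascPochhammer_succ_eval]; positivity
  have hfact := Ring.factorial_nsmul_multichoose_eq_ascPochhammer a m
  rw [Polynomial.ascPochhammer_smeval_eq_eval, nsmul_eq_mul] at hfact
  exact (mul_nonneg_iff_of_pos_left (by positivity)).mp (hfact ▸ hpoch)

theorem Complex.hasSum_multichoose_mul_pow (a : ℂ) {s : ℂ} (hs : ‖s‖ < 1) :
    HasSum (fun m => Ring.multichoose a m * s ^ m) ((1 - s) ^ (-a)) := by
  have hmem : s ∈ Metric.eball (0 : ℂ) 1 := by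
    rw [← ENNReal.ofReal_one, Metric.eball_ofReal]
    simpa using hs
  simpa [FormalMultilinearSeries.ofScalars_apply_eq, Ring.multichoose_eq, cpow_neg, mul_comm] using
    (one_div_one_sub_cpow_hasFPowerSeriesOnBall_zero a).hasSum hmem

theorem IsPSDKernelOn.one_sub_inner_cpow_neg_mul {X ι : Type*} [Fintype ι] {S : Set X}
    {K : X → X → ℂ} (hK : IsPSDKernelOn K S) (v : X → ι → ℂ)
    (hv : ∀ z ∈ S, ∀ w ∈ S, ‖∑ k, v z k * conj (v w k)‖ < 1) {a : ℝ} (ha : 0 ≤ a) :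
    IsPSDKernelOn (fun z w => (1 - ∑ k, v z k * conj (v w k)) ^ (-(a : ℂ)) * K z w) S := by
  refine .of_hasSum (fun m => (hK.inner_pow_mul v m).ofReal_mul (Ring.multichoose_nonneg ha m))
    fun z hz w hw => ?_
  have hcast : ∀ m, ((Ring.multichoose a m : ℝ) : ℂ) = Ring.multichoose (a : ℂ) m :=
    Ring.map_multichoose ofRealHom a
  simpa only [hcast, mul_assoc] using
    (hasSum_multichoose_mul_pow (a : ℂ) (hv z hz w hw)).mul_right (K z w)

theorem EuclideanSpace.norm_sum_mul_conj_lt_one {ι : Type*} [Fintype ι]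
    {z w : EuclideanSpace ℂ ι} (hz : ‖z‖ < 1) (hw : ‖w‖ < 1) :
    ‖∑ i, z i * conj (w i)‖ < 1 := by
  have hinner : ∑ i, z i * conj (w i) = inner ℂ w z := by
    simp only [PiLp.inner_apply, RCLike.inner_apply]
  calc ‖∑ i, z i * conj (w i)‖ ≤ ‖w‖ * ‖z‖ := hinner ▸ norm_inner_le_norm w z
    _ < 1 := by nlinarith [norm_nonneg w, norm_nonneg z]

theorem Complex.re_one_sub_pos {s : ℂ} (hs : ‖s‖ < 1) : 0 < (1 - s).re := by
  simpa using (re_le_norm s).trans_lt hs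

theorem Complex.log_div_of_re_pos {a b : ℂ} (ha : 0 < a.re) (hb : 0 < b.re) :
    log (a / b) = log a - log b := by
  have ha0 : a ≠ 0 := fun h => by simp [h] at ha
  have hb0 : b ≠ 0 := fun h => by simp [h] at hb
  obtain ⟨ha₁, ha₂⟩ := abs_lt.mp (abs_arg_lt_pi_div_two_iff.mpr (Or.inl ha))
  obtain ⟨hb₁, hb₂⟩ := abs_lt.mp (abs_arg_lt_pi_div_two_iff.mpr (Or.inl hb))
  have hbπ : b.arg ≠ Real.pi := by linarith [Real.pi_pos]
  rw [div_eq_mul_inv, (log_mul_eq_add_log_iff ha0 (inv_ne_zero hb0)).mpr, log_inv _ hbπ,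
    sub_eq_add_neg]
  rw [arg_inv, if_neg hbπ]
  constructor <;> linarith [Real.pi_pos]

theorem Complex.cpow_neg_mul_div_cpow {a b : ℂ} (ha : 0 < a.re) (hb : 0 < b.re) (γ : ℂ) :
    a ^ (-γ) * (a / b) ^ γ = b ^ (-γ) := by
  have ha0 : a ≠ 0 := fun h => by simp [h] at ha
  have hb0 : b ≠ 0 := fun h => by simp [h] at hb
  rw [cpow_def_of_ne_zero ha0, cpow_def_of_ne_zero (div_ne_zero ha0 hb0),
    cpow_def_of_ne_zero hb0, ← exp_add, log_div_of_re_pos ha hb]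
  ring_nf

theorem ball_weighted_composition_kernel_psd_general
    (n : ℕ)
    (b : EuclideanSpace ℂ (Fin n) → EuclideanSpace ℂ (Fin n))
    (hb_maps : ∀ z ∈ ball (0 : EuclideanSpace ℂ (Fin n)) 1,
      b z ∈ ball (0 : EuclideanSpace ℂ (Fin n)) 1)
    (α : ℝ) (hα : 1 ≤ α)
    (f : EuclideanSpace ℂ (Fin n) → ℂ)
    (hfpos : IsPSDKernelOn
      (fun z w => ((1 - ∑ i, b z i * conj (b w i)) / (1 - ∑ i, z i * conj (w i))) ^ (α : ℂ) -
        f z * conj (f w))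
      (ball (0 : EuclideanSpace ℂ (Fin n)) 1)) :
    IsPSDKernelOn
      (fun z w => (1 - ∑ i, z i * conj (w i)) ^ (-(α : ℂ)) -
        f z * conj (f w) * (1 - ∑ i, b z i * conj (b w i)) ^ (-(α : ℂ)))
      (ball (0 : EuclideanSpace ℂ (Fin n)) 1) := by
  have hinner {z w : EuclideanSpace ℂ (Fin n)} (hz : z ∈ ball 0 1) (hw : w ∈ ball 0 1) :
      ‖∑ i, z i * conj (w i)‖ < 1 :=
    EuclideanSpace.norm_sum_mul_conj_lt_one (mem_ball_zero_iff.mp hz) (mem_ball_zero_iff.mp hw)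
  refine (hfpos.one_sub_inner_cpow_neg_mul (fun z => b z)
    (fun z hz w hw => hinner (hb_maps z hz) (hb_maps w hw)) (by linarith)).congr
    fun z hz w hw => ?_
  rw [mul_sub, cpow_neg_mul_div_cpow (re_one_sub_pos (hinner (hb_maps z hz) (hb_maps w hw)))
    (re_one_sub_pos (hinner hz hw))]
  ring

/-- Kernel form of `‖M_f C_b‖ ≤ ‖f‖_{H²_{n,α}(b)}` on the ball: if both
`K^{b,α}` and `K^{b,α}(z,w) − f(z)·conj(f(w))` are positive semidefinite, then
so is `(1 − ⟨z,w⟩)^{−α} − f(z)·conj(f(w))·(1 − ⟨b z, b w⟩)^{−α}`. -/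
theorem ball_weighted_composition_kernel_psd
    (n : ℕ) (hn : 1 ≤ n)
    (b : EuclideanSpace ℂ (Fin n) → EuclideanSpace ℂ (Fin n))
    (hb_holo : DifferentiableOn ℂ b (ball (0 : EuclideanSpace ℂ (Fin n)) 1))
    (hb_maps : ∀ z ∈ ball (0 : EuclideanSpace ℂ (Fin n)) 1,
      b z ∈ ball (0 : EuclideanSpace ℂ (Fin n)) 1)
    (α : ℝ) (hα : 1 ≤ α)
    (f : EuclideanSpace ℂ (Fin n) → ℂ)
    (hKpos : IsPSDKernelOn
      (fun z w => ((1 - ∑ i, b z i * conj (b w i)) / (1 - ∑ i, z i * conj (w i))) ^ (α : ℂ))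
      (ball (0 : EuclideanSpace ℂ (Fin n)) 1))
    (hfpos : IsPSDKernelOn
      (fun z w => ((1 - ∑ i, b z i * conj (b w i)) / (1 - ∑ i, z i * conj (w i))) ^ (α : ℂ) -
        f z * conj (f w))
      (ball (0 : EuclideanSpace ℂ (Fin n)) 1)) :
    IsPSDKernelOn
      (fun z w => (1 - ∑ i, z i * conj (w i)) ^ (-(α : ℂ)) -
        f z * conj (f w) * (1 - ∑ i, b z i * conj (b w i)) ^ (-(α : ℂ)))
      (ball (0 : EuclideanSpace ℂ (Fin n)) 1) :=
  ball_weighted_composition_kernel_psd_general n b hb_maps α hα f hfpos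
end
end
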